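/- Let X_1,…,X_n be independent random variables each distributed according to a probability measure F on S. Let A ⊂ {1,…,n} be a fixed subset of size m with m ≤ n−2, let θ̂(A) be any measurable function of (X_i)_{i∈A} taking values in a parameter space Θ, let {M_θ : θ ∈ Θ} be a measurable family of probability measures on S, and let K be a bounded symmetric measurable kernel, possibly depending measurably on its second measure argument. Then the statistic U(A) = (1/((n−m)(n−m−1))) Σ_{i,j ∈ A^c, i≠j} K_{cen(M_{θ̂(A)})}(X_i, X_j) is an unbiased estimator of the quadratic risk at sample size m: E[U(A)] = E[d_K(F, M_{θ̂(A)})] = ρ(F, M, m). -/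

import Mathlib

open MeasureTheory ProbabilityTheory

/-- The quadratic distance d_K(F,G) = ∬ K(s,t) d(F−G)(s) d(F−G)(t), written as the
iterated integral of s ↦ ∫ K(s,t) d(F−G)(t) against the signed measure F−G. -/
noncomputable def quadDist {S : Type*} [MeasurableSpace S] (K : S → S → ℝ)
    (F G : Measure S) : ℝ :=
  (∫ s, (∫ t, K s t ∂F - ∫ t, K s t ∂G) ∂F) - ∫ s, (∫ t, K s t ∂F - ∫ t, K s t ∂G) ∂G

/-- The G-centered kernel
K_{cen(G)}(x,y) = K(x,y) − K(x,G) − K(G,y) + K(G,G). -/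
noncomputable def kcen {S : Type*} [MeasurableSpace S] (K : S → S → ℝ) (G : Measure S)
    (x y : S) : ℝ :=
  K x y - ∫ t, K x t ∂G - ∫ s, K s y ∂G + ∫ s, ∫ t, K s t ∂G ∂G

/-! For `i ≠ j` outside `A`, the pair `(X i, X j)` is independent of the estimate `θ̂ = T (X|_A)`
and has law `F ⊗ F`. Freezing `θ̂ = θ`, the expectation of `K_{cen(M θ)}(X i, X j)` is therefore
`∫ K_{cen(M θ)} d(F ⊗ F)`, which expands to `d_K(F, M θ)` once Fubini identifies the cross terms
`K(F, M θ)` and `K(M θ, F)`. So each of the `(n - m)(n - m - 1)` ordered pairs of indices outside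
`A` contributes the risk `E[d_K(F, M θ̂)]`, and the normalisation averages them. -/

lemma integrable_of_abs_le {α : Type*} [MeasurableSpace α] {μ : Measure α} [IsFiniteMeasure μ]
    {f : α → ℝ} (hf : Measurable f) {C : ℝ} (h : ∀ x, |f x| ≤ C) : Integrable f μ :=
  .of_bound hf.aestronglyMeasurable C (ae_of_all _ h)

lemma abs_integral_le_of_abs_le {α : Type*} [MeasurableSpace α] {μ : Measure α}
    [IsFiniteMeasure μ] {f : α → ℝ} {C : ℝ} (h : ∀ x, |f x| ≤ C) :
    |∫ x, f x ∂μ| ≤ C * μ.real Set.univ :=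
  norm_integral_le_of_norm_le_const (μ := μ) (f := f) (ae_of_all _ h)

section Kcen

variable {S : Type*} [MeasurableSpace S] {k : S → S → ℝ} {C : ℝ}

lemma abs_kcen_le (hk : ∀ x y, |k x y| ≤ C) (G : Measure S) [IsProbabilityMeasure G] (x y : S) :
    |kcen k G x y| ≤ 4 * C := by
  have hG : ∀ f : S → ℝ, (∀ s, |f s| ≤ C) → |∫ s, f s ∂G| ≤ C := fun f hf => by
    simpa using abs_integral_le_of_abs_le (μ := G) hf
  have h1 := hG _ (hk x)
  have h2 := hG _ (hk · y)
  have h3 := hG _ fun s => hG _ (hk s)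
  have h0 := hk x y
  rw [abs_le] at *
  unfold kcen
  constructor <;> linarith

theorem integral_kcen_prod (hk : Measurable (Function.uncurry k)) (hC : ∀ x y, |k x y| ≤ C)
    (F G : Measure S) [IsProbabilityMeasure F] [IsFiniteMeasure G] :
    ∫ p, kcen k G p.1 p.2 ∂(F.prod F) = quadDist k F G := by
  set a : S → ℝ := fun x => ∫ t, k x t ∂G
  set b : S → ℝ := fun y => ∫ s, k s y ∂G
  set u : S → ℝ := fun x => ∫ t, k x t ∂F
  set c : ℝ := ∫ s, ∫ t, k s t ∂G ∂G
  have ha : Measurable a := hk.stronglyMeasurable.integral_prod_right'.measurable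
  have hb : Measurable b := hk.stronglyMeasurable.integral_prod_left'.measurable
  have hu : Measurable u := hk.stronglyMeasurable.integral_prod_right'.measurable
  have hab : ∀ x, |a x| ≤ C * G.real Set.univ := fun x => abs_integral_le_of_abs_le (hC x)
  have hbb : ∀ y, |b y| ≤ C * G.real Set.univ := fun y => abs_integral_le_of_abs_le (hC · y)
  have hub : ∀ x, |u x| ≤ C := fun x => by
    simpa using abs_integral_le_of_abs_le (μ := F) (hC x)
  have hkI : Integrable (Function.uncurry k) (F.prod F) :=
    integrable_of_abs_le hk fun p => hC p.1 p.2
  have haI : ∀ μ : Measure S, [IsFiniteMeasure μ] → Integrable a μ :=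
    fun μ _ => integrable_of_abs_le ha hab
  have huI : ∀ μ : Measure S, [IsFiniteMeasure μ] → Integrable u μ :=
    fun μ _ => integrable_of_abs_le hu hub
  have hbI : Integrable b F := integrable_of_abs_le hb hbb
  have hcross : ∫ y, b y ∂F = ∫ x, u x ∂G :=
    integral_integral_swap (f := fun y s => k s y) (integrable_of_abs_le
      (hk.comp measurable_swap) fun p => hC p.2 p.1)
  have hsplit : ∫ p, kcen k G p.1 p.2 ∂(F.prod F)
      = ∫ p, Function.uncurry k p ∂(F.prod F) - ∫ x, a x ∂F - ∫ y, b y ∂F + c := by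
    change ∫ p, (Function.uncurry k p - a p.1 - b p.2 + c) ∂(F.prod F) = _
    have haI' := (haI F).comp_fst F
    have hbI' := hbI.comp_snd F
    rw [integral_add ((hkI.sub' haI').sub' hbI') (integrable_const c),
      integral_sub (hkI.sub' haI') hbI', integral_sub hkI haI', integral_fun_fst, integral_fun_snd]
    simp
  rw [hsplit, hcross, integral_prod _ hkI, quadDist, integral_sub (huI F) (haI F),
    integral_sub (huI G) (haI G)]
  show ∫ x, u x ∂F - _ - _ + c = _ - _ - (_ - c)
  ring

end Kcen

theorem measurable_kcen_kernel {S Θ : Type*} [MeasurableSpace S] [MeasurableSpace Θ]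
    (κ : Kernel Θ S) [IsSFiniteKernel κ] {k : Θ → S → S → ℝ}
    (hk : Measurable fun p : Θ × S × S => k p.1 p.2.1 p.2.2) :
    Measurable fun p : Θ × S × S => kcen (k p.1) (κ p.1) p.2.1 p.2.2 := by
  let κ' : Kernel (Θ × S) S := κ.comap Prod.fst measurable_fst
  have hk₁ : Measurable fun r : (Θ × S) × S => k r.1.1 r.1.2 r.2 :=
    hk.comp (f := fun r : (Θ × S) × S => (r.1.1, r.1.2, r.2)) (by fun_prop)
  have hk₂ : Measurable fun r : (Θ × S) × S => k r.1.1 r.2 r.1.2 :=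
    hk.comp (f := fun r : (Θ × S) × S => (r.1.1, r.2, r.1.2)) (by fun_prop)
  have hleft : Measurable fun q : Θ × S => ∫ t, k q.1 q.2 t ∂κ q.1 :=
    (hk₁.stronglyMeasurable.integral_kernel_prod_right' (κ := κ')).measurable
  have hright : Measurable fun q : Θ × S => ∫ s, k q.1 s q.2 ∂κ q.1 :=
    (hk₂.stronglyMeasurable.integral_kernel_prod_right' (κ := κ')).measurable
  have hboth : Measurable fun θ => ∫ s, ∫ t, k θ s t ∂κ θ ∂κ θ :=
    (hleft.stronglyMeasurable.integral_kernel_prod_right' (κ := κ)).measurable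
  exact ((hk.sub (hleft.comp (f := fun p : Θ × S × S => (p.1, p.2.1)) (by fun_prop))).sub
    (hright.comp (f := fun p : Θ × S × S => (p.1, p.2.2)) (by fun_prop))).add
    (hboth.comp measurable_fst)

namespace ProbabilityTheory

variable {Ω : Type*} [MeasurableSpace Ω] {P : Measure Ω}

theorem IndepFun.integral_comp_prodMk [IsFiniteMeasure P] {E V : Type*} [MeasurableSpace E]
    [MeasurableSpace V] {W : Ω → E} {Z : Ω → V} (hWZ : IndepFun W Z P) (hW : AEMeasurable W P)
    (hZ : AEMeasurable Z P) {h : E × V → ℝ} (hh : Integrable h ((P.map W).prod (P.map Z))) :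
    ∫ ω, h (W ω, Z ω) ∂P = ∫ ω, ∫ e, h (e, Z ω) ∂(P.map W) ∂P := by
  have hlaw := (indepFun_iff_map_prod_eq_prod_map_map hW hZ).mp hWZ
  calc ∫ ω, h (W ω, Z ω) ∂P = ∫ p, h p ∂(P.map fun ω => (W ω, Z ω)) :=
        (integral_map (hW.prodMk hZ) (hlaw ▸ hh.aestronglyMeasurable)).symm
    _ = ∫ z, ∫ e, h (e, z) ∂(P.map W) ∂(P.map Z) := by rw [hlaw, integral_prod_symm h hh]
    _ = ∫ ω, ∫ e, h (e, Z ω) ∂(P.map W) ∂P :=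
        integral_map hZ hh.integral_prod_right.aestronglyMeasurable

variable {ι S : Type*} [MeasurableSpace S] {X : ι → Ω → S}

theorem iIndepFun.indepFun_prodMk_restrict (hX : iIndepFun X P) (hXm : ∀ i, Measurable (X i))
    {A : Finset ι} {i j : ι} (hi : i ∉ A) (hj : j ∉ A) :
    IndepFun (fun ω => (X i ω, X j ω)) (fun ω (a : A) => X a ω) P := by
  classical
  have hdisj : Disjoint ({i, j} : Finset ι) A := by
    simp [Finset.disjoint_left, hi, hj]
  refine (hX.indepFun_finset {i, j} A hdisj hXm).comp
    (φ := fun w => (w ⟨i, by simp⟩, w ⟨j, by simp⟩)) ?_ measurable_id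
  fun_prop

theorem iIndepFun.map_prodMk_eq_prod [IsFiniteMeasure P] (hX : iIndepFun X P)
    (hXm : ∀ i, Measurable (X i)) {F : Measure S} (hXF : ∀ i, P.map (X i) = F) {i j : ι}
    (hij : i ≠ j) :
    P.map (fun ω => (X i ω, X j ω)) = F.prod F := by
  rw [(indepFun_iff_map_prod_eq_prod_map_map (hXm i).aemeasurable (hXm j).aemeasurable).mp
    (hX.indepFun hij), hXF, hXF]

theorem iIndepFun.integral_comp_pair_eq_integral_prod [IsFiniteMeasure P] (hX : iIndepFun X P)
    (hXm : ∀ i, Measurable (X i)) {F : Measure S} (hXF : ∀ i, P.map (X i) = F)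
    {A : Finset ι} {i j : ι} (hi : i ∉ A) (hj : j ∉ A) (hij : i ≠ j)
    {V : Type*} [MeasurableSpace V] {T : (A → S) → V} (hT : Measurable T)
    {H : (S × S) × V → ℝ} (hH : Measurable H) {C : ℝ} (hHC : ∀ p, |H p| ≤ C) :
    ∫ ω, H ((X i ω, X j ω), T fun a => X a ω) ∂P
      = ∫ ω, ∫ x, H (x, T fun a => X a ω) ∂(F.prod F) ∂P := by
  have hind : IndepFun (fun ω => (X i ω, X j ω)) (fun ω => T fun a => X a ω) P :=
    (hX.indepFun_prodMk_restrict hXm hi hj).comp measurable_id hT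
  have hTX : Measurable fun ω => T fun a : A => X a ω :=
    hT.comp (measurable_pi_lambda _ fun a => hXm a)
  rw [hind.integral_comp_prodMk (by fun_prop) hTX.aemeasurable (integrable_of_abs_le hH hHC),
    hX.map_prodMk_eq_prod hXm hXF hij]

end ProbabilityTheory

theorem integral_one_div_card_mul_sum_of_integral_eq {Ω ι : Type*} [MeasurableSpace Ω]
    {P : Measure Ω} {s : Finset ι} (hs : s.Nonempty) {g : ι → Ω → ℝ}
    (hg : ∀ i ∈ s, Integrable (g i) P) {R : ℝ} (hR : ∀ i ∈ s, ∫ ω, g i ω ∂P = R) :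
    ∫ ω, 1 / (s.card : ℝ) * ∑ i ∈ s, g i ω ∂P = R := by
  rw [integral_const_mul, integral_finsetSum s hg, Finset.sum_congr rfl hR, Finset.sum_const,
    nsmul_eq_mul, ← mul_assoc, one_div_mul_cancel (by simp [hs.ne_empty]), one_mul]

theorem sum_sum_ite_eq_sum_offDiag_compl {ι M : Type*} [Fintype ι] [DecidableEq ι]
    [AddCommMonoid M] (A : Finset ι) (f : ι → ι → M) :
    ∑ i, ∑ j, (if i ∉ A ∧ j ∉ A ∧ i ≠ j then f i j else 0)
      = ∑ p ∈ Aᶜ.offDiag, f p.1 p.2 := by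
  rw [← Finset.sum_product', ← Finset.sum_filter]
  congr 1
  ext p
  simp

theorem subset_ustatistic_unbiased_risk_general {S Ω Θ : Type*}
    [MeasurableSpace S] [MeasurableSpace Ω] [MeasurableSpace Θ]
    (P : Measure Ω) [IsProbabilityMeasure P]
    (F : Measure S) [IsProbabilityMeasure F]
    (M : Θ → Measure S) (hMprob : ∀ θ, IsProbabilityMeasure (M θ))
    (hMmeas : Measurable M)
    (K : Measure S → S → S → ℝ)
    (hKmeas : Measurable fun p : Measure S × S × S => K p.1 p.2.1 p.2.2)
    (hKbdd : ∃ Cb : ℝ, ∀ (G : Measure S) x y, |K G x y| ≤ Cb)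
    (n m : ℕ) (hnm : m + 2 ≤ n)
    (X : Fin n → Ω → S)
    (hXmeas : ∀ i, Measurable (X i))
    (hXindep : iIndepFun X P)
    (hXdist : ∀ i, Measure.map (X i) P = F)
    (A : Finset (Fin n)) (hA : A.card = m)
    (T : ({ i // i ∈ A } → S) → Θ)
    (hT : Measurable T) :
    ∫ ω, (1 / (((n : ℝ) - m) * ((n : ℝ) - m - 1))) *
        ∑ i, ∑ j,
          (if i ∉ A ∧ j ∉ A ∧ i ≠ j then
            kcen (K (M (T (fun i => X i.1 ω)))) (M (T (fun i => X i.1 ω)))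
              (X i ω) (X j ω)
          else 0) ∂P
      = ∫ ω, quadDist (K (M (T (fun i => X i.1 ω)))) F (M (T (fun i => X i.1 ω))) ∂P := by
  obtain ⟨C, hC⟩ := hKbdd
  let κ : Kernel Θ S := ⟨M, hMmeas⟩
  have : IsMarkovKernel κ := ⟨hMprob⟩
  have hH : Measurable fun p : (S × S) × Θ => kcen (K (M p.2)) (M p.2) p.1.1 p.1.2 :=
    (measurable_kcen_kernel κ (k := fun θ => K (M θ))
      (hKmeas.comp (f := fun p : Θ × S × S => (M p.1, p.2)) (by fun_prop))).comp
      (f := fun p : (S × S) × Θ => (p.2, p.1)) (by fun_prop)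
  have hHC (p : (S × S) × Θ) : |kcen (K (M p.2)) (M p.2) p.1.1 p.1.2| ≤ 4 * C :=
    abs_kcen_le (hC _) _ _ _
  have hKsec (G : Measure S) : Measurable (Function.uncurry (K G)) :=
    hKmeas.comp (f := fun q : S × S => (G, q)) (by fun_prop)
  have hcard : ((n : ℝ) - m) * ((n : ℝ) - m - 1) = (Aᶜ.offDiag.card : ℝ) := by
    rw [Finset.offDiag_card, Finset.card_compl, Fintype.card_fin, hA,
      Nat.cast_sub (Nat.le_mul_self _), Nat.cast_mul, Nat.cast_sub (by omega)]
    ring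
  have hne : Aᶜ.offDiag.Nonempty := by
    rw [← Finset.card_pos, ← Nat.cast_pos (α := ℝ), ← hcard]
    have : (m : ℝ) + 2 ≤ n := by exact_mod_cast hnm
    nlinarith
  rw [hcard]
  simp_rw [sum_sum_ite_eq_sum_offDiag_compl]
  apply integral_one_div_card_mul_sum_of_integral_eq hne
  · intro p _
    exact integrable_of_abs_le (hH.comp (f := fun ω => ((X p.1 ω, X p.2 ω), T fun a => X a ω))
      (by fun_prop)) fun ω => hHC ((X p.1 ω, X p.2 ω), T fun a => X a ω)
  intro p hp
  obtain ⟨hi, hj, hij⟩ : p.1 ∉ A ∧ p.2 ∉ A ∧ p.1 ≠ p.2 := by simpa using hp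
  refine (hXindep.integral_comp_pair_eq_integral_prod hXmeas hXdist hi hj hij hT hH hHC).trans
    (integral_congr_ae (ae_of_all _ fun ω => ?_))
  dsimp only
  exact integral_kcen_prod (hKsec _) (hC _) F _

/-- for X_1,…,X_n i.i.d. with law F, a fixed subset A of size m ≤ n−2,
an estimator θ̂(A) depending measurably on (X_i)_{i∈A}, a measurable family of
probability measures {M_θ}, and a kernel K possibly depending measurably on its second
measure argument, the statistic
U(A) = (1/((n−m)(n−m−1))) Σ_{i,j ∈ Aᶜ, i≠j} K_{cen(M_{θ̂(A)})}(X_i, X_j)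
is unbiased for the quadratic risk at sample size m:
E[U(A)] = E[d_K(F, M_{θ̂(A)})] = ρ(F,M,m). -/
theorem subset_ustatistic_unbiased_risk {S Ω Θ : Type*}
    [MeasurableSpace S] [MeasurableSpace Ω] [MeasurableSpace Θ]
    (P : Measure Ω) [IsProbabilityMeasure P]
    (F : Measure S) [IsProbabilityMeasure F]
    (M : Θ → Measure S) (hMprob : ∀ θ, IsProbabilityMeasure (M θ))
    (hMmeas : Measurable M)
    (K : Measure S → S → S → ℝ)
    (hKmeas : Measurable fun p : Measure S × S × S => K p.1 p.2.1 p.2.2)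
    (hKbdd : ∃ Cb : ℝ, ∀ (G : Measure S) x y, |K G x y| ≤ Cb)
    (hKsymm : ∀ (G : Measure S) x y, K G x y = K G y x)
    (n m : ℕ) (hnm : m + 2 ≤ n)
    (X : Fin n → Ω → S)
    (hXmeas : ∀ i, Measurable (X i))
    (hXindep : iIndepFun X P)
    (hXdist : ∀ i, Measure.map (X i) P = F)
    (A : Finset (Fin n)) (hA : A.card = m)
    (T : ({ i // i ∈ A } → S) → Θ)
    (hT : Measurable T) :
    ∫ ω, (1 / (((n : ℝ) - m) * ((n : ℝ) - m - 1))) *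
        ∑ i, ∑ j,
          (if i ∉ A ∧ j ∉ A ∧ i ≠ j then
            kcen (K (M (T (fun i => X i.1 ω)))) (M (T (fun i => X i.1 ω)))
              (X i ω) (X j ω)
          else 0) ∂P
      = ∫ ω, quadDist (K (M (T (fun i => X i.1 ω)))) F (M (T (fun i => X i.1 ω))) ∂P :=
  subset_ustatistic_unbiased_risk_general P F M hMprob hMmeas K hKmeas hKbdd n m hnm X hXmeas
    hXindep hXdist A hA T hT
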